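/- Let a_0 ≠ 0 and a_1, …, a_n be real numbers, and let R be a real polynomial of degree d. If Q is a real polynomial satisfying a_0 Q + a_1 Q' + ⋯ + a_n Q^{(n)} = R, then deg Q = d. -/

import Mathlib

open Polynomial Finset

namespace Polynomial

variable {R : Type*} [Semiring R]

theorem degree_iterate_derivative_le (p : R[X]) (k : ℕ) :
    (derivative^[k] p).degree ≤ p.degree := by
  induction k with
  | zero => rfl
  | succ k ih =>
    rw [Function.iterate_succ_apply']
    exact degree_derivative_le.trans ih

theorem degree_iterate_derivative_succ_lt {p : R[X]} (hp : p ≠ 0) (k : ℕ) :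
    (derivative^[k + 1] p).degree < p.degree := by
  rw [Function.iterate_succ_apply]
  exact (degree_iterate_derivative_le _ k).trans_lt (degree_derivative_lt hp)

theorem degree_sum_C_mul_iterate_derivative [NoZeroDivisors R] {a : ℕ → R} (ha : a 0 ≠ 0)
    (n : ℕ) (p : R[X]) :
    (∑ j ∈ range (n + 1), C (a j) * derivative^[j] p).degree = p.degree := by
  rcases eq_or_ne p 0 with rfl | hp
  · simp
  have higher_terms_lt :
      (∑ j ∈ range n, C (a (j + 1)) * derivative^[j + 1] p).degree < p.degree := by
    refine (degree_sum_le _ _).trans_lt ((Finset.sup_lt_iff (bot_lt_iff_ne_bot.2 ?_)).2 ?_)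
    · exact degree_ne_bot.2 hp
    · intro j _
      rw [← smul_eq_C_mul]
      exact (degree_smul_le _ _).trans_lt (degree_iterate_derivative_succ_lt hp j)
  rw [sum_range_succ', Function.iterate_zero_apply, add_comm,
    degree_add_eq_left_of_degree_lt, degree_C_mul ha]
  rwa [degree_C_mul ha]

end Polynomial

theorem stmt_19_general (n : ℕ) (a : ℕ → ℝ) (ha : a 0 ≠ 0)
    (R : Polynomial ℝ) (Q : Polynomial ℝ)
    (hQ : ∑ j ∈ range (n + 1), C (a j) * Polynomial.derivative^[j] Q = R) :
    Q.degree = R.degree := by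
  rw [← hQ, degree_sum_C_mul_iterate_derivative ha]

theorem stmt_19 (n : ℕ) (a : ℕ → ℝ) (ha : a 0 ≠ 0)
    (R : Polynomial ℝ) (hR : R ≠ 0) (Q : Polynomial ℝ)
    (hQ : ∑ j ∈ range (n + 1), C (a j) * Polynomial.derivative^[j] Q = R) :
    Q.degree = R.degree :=
  stmt_19_general n a ha R Q hQ
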